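/- Let G be a semi-Markovian DAG satisfying Assumption 1. Let x_t ∈ X^(o) be a node that has either a directed edge x_t → t or a bi-directed edge to t (i.e., some unobserved node u with edges u → x_t and u → t). Let G_e be the sub-sampled graph built from x_t and an arbitrary subset V_0 ⊆ (X^(o) ∪ {t}) \ {x_t}, and let Z ⊆ X^(o) \ {x_t}. If e and y are d-separated by Z ∪ {t} in G_e, then Z satisfies the back-door criterion relative to (t, y) in G. -/

import Mathlib

namespace CausalDAG

variable {V : Type*}

/-- Adjacency: an edge between `u` and `v` in either direction. -/
def Adj (E : V → V → Prop) (u v : V) : Prop := E u v ∨ E v u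

/-- `d` is a descendant of `v`: there is a directed path from `v` to `d`. -/
def Descendant (E : V → V → Prop) (v d : V) : Prop := Relation.TransGen E v d

/-- The directed graph with edge relation `E` is acyclic. -/
def Acyclic (E : V → V → Prop) : Prop := ∀ v, ¬ Relation.TransGen E v v

/-- A path between `a` and `b` in the graph with edge relation `E`:
a sequence of at least two distinct nodes, starting at `a`, ending at `b`,
with consecutive nodes joined by an edge (in either direction). -/
structure GPath (E : V → V → Prop) (a b : V) where
  nodes : List V
  nodup : nodes.Nodup
  two_le : 2 ≤ nodes.length
  head_eq : nodes.head? = some a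
  last_eq : nodes.getLast? = some b
  chain : nodes.Chain' (Adj E)

namespace GPath

variable {E : V → V → Prop} {a b : V}

/-- `i` is an interior position of the path. -/
def Interior (p : GPath E a b) (i : ℕ) : Prop := 0 < i ∧ i + 1 < p.nodes.length

/-- The node at interior position `i` is a collider on the path: both adjacent
edges of the path point into it. -/
def ColliderAt (p : GPath E a b) (i : ℕ) : Prop :=
  ∃ x v z, p.nodes[(i - 1)]? = some x ∧ p.nodes[i]? = some v ∧
    p.nodes[(i + 1)]? = some z ∧ E x v ∧ E z v

/-- The path is blocked by the set `S`. -/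
def BlockedBy (p : GPath E a b) (S : Set V) : Prop :=
  ∃ i v, p.Interior i ∧ p.nodes[i]? = some v ∧
    ((¬ p.ColliderAt i ∧ v ∈ S) ∨
      (p.ColliderAt i ∧ v ∉ S ∧ ∀ d, Descendant E v d → d ∉ S))

/-- The path contains the directed edge `u → v` as one of its steps. -/
def UsesEdge (p : GPath E a b) (u v : V) : Prop :=
  E u v ∧ ∃ i, (p.nodes[i]? = some u ∧ p.nodes[(i + 1)]? = some v) ∨
    (p.nodes[i]? = some v ∧ p.nodes[(i + 1)]? = some u)

/-- The path contains an edge pointing into its first endpoint. -/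
def IntoFirst (p : GPath E a b) : Prop :=
  ∃ w, p.nodes[1]? = some w ∧ E w a

end GPath

/-- `a` and `b` are d-separated by `S`: every path between them is blocked by `S`. -/
def DSep (E : V → V → Prop) (a b : V) (S : Set V) : Prop :=
  ∀ p : GPath E a b, p.BlockedBy S

/-- `Z` satisfies the back-door criterion relative to `(t, y)`: no node of `Z` is a
descendant of `t`, and `Z` blocks every path between `t` and `y` containing an edge
pointing into `t`. -/
def BackDoor (E : V → V → Prop) (t y : V) (Z : Set V) : Prop :=
  (∀ z ∈ Z, ¬ Descendant E t z) ∧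
  ∀ p : GPath E t y, p.IntoFirst → p.BlockedBy Z

/-- A semi-Markovian DAG: observed features `Xo`, unobserved features `Xu`,
treatment `t`, outcome `y`; unobserved nodes have no parents and at most two
children. -/
structure SemiMarkov (V : Type*) where
  E : V → V → Prop
  Xo : Set V
  Xu : Set V
  t : V
  y : V
  acyclic : Acyclic E
  t_ne_y : t ≠ y
  t_notin : t ∉ Xo ∪ Xu
  y_notin : y ∉ Xo ∪ Xu
  disjoint : Disjoint Xo Xu
  cover : ∀ v, v ∈ Xo ∨ v ∈ Xu ∨ v = t ∨ v = y
  unobs_no_parents : ∀ u ∈ Xu, ∀ w, ¬ E w u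
  unobs_children : ∀ u ∈ Xu, ∃ a b, ∀ c, E u c → c = a ∨ c = b

/-- Assumption 1: `y` is the only child of `t`, and `y` has no children. -/
def Assumption1 (M : SemiMarkov V) : Prop :=
  M.E M.t M.y ∧ (∀ w, M.E M.t w → w = M.y) ∧ ∀ w, ¬ M.E M.y w

/-- Edge relation of the sub-sampled graph `G_e`: a new node `e` (represented by
`none`) is added, together with the edge `x_t → e` and an edge `v → e` for each
`v ∈ V0`. -/
def subEdge (E : V → V → Prop) (xt : V) (V0 : Set V) :
    Option V → Option V → Prop
  | some u, some v => E u v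
  | some u, none => u = xt ∨ u ∈ V0
  | none, _ => False

end CausalDAG

/-! A back-door path left open by `Z` is also open given `Z ∪ {t}`, as `t` is its endpoint. It
is rerouted into an open path from `x_t`, and then from `e` through `x_t → e`: the new nodes
`x_t` and `u` are non-colliders outside `Z ∪ {t}`, and `t`, if it remains on the path, is a
collider with both of its path neighbours as parents, hence open. This contradicts the
d-separation of `e` and `y`. The descendant condition holds because `y` is the only descendant
of `t`. -/

namespace CausalDAG

variable {V : Type*}

namespace GPath

variable {E : V → V → Prop} {a b c : V} {S : Set V}

def BlocksAt (p : GPath E a b) (S : Set V) (i : ℕ) : Prop :=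
  ∃ v, p.Interior i ∧ p.nodes[i]? = some v ∧
    ((¬ p.ColliderAt i ∧ v ∈ S) ∨
      (p.ColliderAt i ∧ v ∉ S ∧ ∀ d, Descendant E v d → d ∉ S))

theorem nodes_getElem?_zero (p : GPath E a b) : p.nodes[0]? = some a := by
  rw [← List.head?_eq_getElem?]; exact p.head_eq

theorem nodes_getElem?_length_sub_one (p : GPath E a b) :
    p.nodes[p.nodes.length - 1]? = some b := by
  rw [← List.getLast?_eq_getElem?]; exact p.last_eq

theorem BlockedBy.of_union_head {p : GPath E a b}
    (h : p.BlockedBy (S ∪ {a})) : p.BlockedBy S := by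
  obtain ⟨i, v, hi, hv, ⟨hnc, hvS⟩ | ⟨hc, hvS, hdS⟩⟩ := h
  · have hva : v ≠ a := by
      rintro rfl
      have hi0 := (List.getElem?_inj (by have := hi.2; omega) p.nodup).1
        (hv.trans p.nodes_getElem?_zero.symm)
      exact hi.1.ne' hi0
    exact ⟨i, v, hi, hv, .inl ⟨hnc, hvS.resolve_right hva⟩⟩
  · exact ⟨i, v, hi, hv, .inr ⟨hc, fun h => hvS (.inl h), fun d hd h => hdS d hd (.inl h)⟩⟩

def cons (q : GPath E a b) (x : V) (hx : x ∉ q.nodes) (hxa : Adj E x a) : GPath E x b where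
  nodes := x :: q.nodes
  nodup := List.nodup_cons.2 ⟨hx, q.nodup⟩
  two_le := by have := q.two_le; simp only [List.length_cons]; omega
  head_eq := rfl
  last_eq := by rw [List.getLast?_cons, q.last_eq]; rfl
  chain := List.isChain_cons.2 ⟨by rw [q.head_eq]; rintro _ ⟨⟩; exact hxa, q.chain⟩

def drop (p : GPath E a b) (j : ℕ) (hj : p.nodes[j]? = some c) (hcb : c ≠ b) :
    GPath E c b where
  nodes := p.nodes.drop j
  nodup := p.nodup.sublist (List.drop_sublist j p.nodes)
  two_le := by
    have hjlt : j < p.nodes.length := (List.getElem?_eq_some_iff.1 hj).1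
    have hjy : j ≠ p.nodes.length - 1 := by
      rintro rfl; exact hcb (Option.some.inj (hj.symm.trans p.nodes_getElem?_length_sub_one))
    simp only [List.length_drop]; omega
  head_eq := by rw [List.head?_drop, hj]
  last_eq := by
    rw [List.getLast?_drop, if_neg, p.last_eq]
    have := (List.getElem?_eq_some_iff.1 hj).1; omega
  chain := p.chain.drop j

def map {W : Type*} {E' : W → W → Prop} (p : GPath E a b) (f : V ↪ W)
    (hf : ∀ u v, E u v → E' (f u) (f v)) : GPath E' (f a) (f b) where
  nodes := p.nodes.map f
  nodup := p.nodup.map f.injective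
  two_le := by simpa using p.two_le
  head_eq := by rw [List.head?_map, p.head_eq]; rfl
  last_eq := by rw [List.getLast?_map, p.last_eq]; rfl
  chain := List.isChain_map _ |>.2 (p.chain.imp fun u v h => h.imp (hf u v) (hf v u))

theorem colliderAt_cons_add_two (q : GPath E a b) (x : V) (hx : x ∉ q.nodes) (hxa : Adj E x a)
    (i : ℕ) : (q.cons x hx hxa).ColliderAt (i + 2) ↔ q.ColliderAt (i + 1) := by
  simp [ColliderAt, cons]

theorem colliderAt_drop (p : GPath E a b) (j : ℕ) (hj : p.nodes[j]? = some c) (hcb : c ≠ b)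
    {i : ℕ} (hi : 0 < i) : (p.drop j hj hcb).ColliderAt i ↔ p.ColliderAt (j + i) := by
  simp only [ColliderAt, drop, List.getElem?_drop]
  rw [show j + (i - 1) = j + i - 1 by omega, Nat.add_assoc]

theorem colliderAt_map {W : Type*} {E' : W → W → Prop} (p : GPath E a b) (f : V ↪ W)
    (hf : ∀ u v, E u v → E' (f u) (f v)) (hf' : ∀ u v, E' (f u) (f v) → E u v) (i : ℕ) :
    (p.map f hf).ColliderAt i ↔ p.ColliderAt i := by
  have hE (u v : V) : E' (f u) (f v) ↔ E u v := ⟨hf' u v, hf u v⟩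
  simp [ColliderAt, map, hE]

theorem BlocksAt.of_cons {q : GPath E a b} {x : V} {hx : x ∉ q.nodes} {hxa : Adj E x a} {i : ℕ}
    (h : (q.cons x hx hxa).BlocksAt S (i + 2)) : q.BlocksAt S (i + 1) := by
  obtain ⟨v, ⟨-, hi⟩, hv, hblock⟩ := h
  refine ⟨v, ⟨i.succ_pos, by simpa [cons] using hi⟩, by simpa [cons] using hv, ?_⟩
  rwa [colliderAt_cons_add_two] at hblock

theorem BlockedBy.of_cons {q : GPath E a b} {x : V} {hx : x ∉ q.nodes} {hxa : Adj E x a}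
    (h : (q.cons x hx hxa).BlockedBy S) (h1 : ¬ (q.cons x hx hxa).BlocksAt S 1) :
    q.BlockedBy S := by
  obtain ⟨_ | _ | i, hi⟩ := h
  · obtain ⟨_, ⟨h0, -⟩, -⟩ := hi
    exact absurd h0 (lt_irrefl 0)
  · exact absurd hi h1
  · exact ⟨i + 1, BlocksAt.of_cons hi⟩

theorem not_blocksAt_one_cons_of_not_edge (q : GPath E a b) {x : V} (hx : x ∉ q.nodes)
    (hxa : Adj E x a) (hE : ¬ E x a) (haS : a ∉ S) : ¬ (q.cons x hx hxa).BlocksAt S 1 := by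
  have h1 : (q.cons x hx hxa).nodes[1]? = some a := q.nodes_getElem?_zero
  rintro ⟨v, -, hv, ⟨-, hvS⟩ | ⟨⟨x', v', -, hx', hv', -, hxv, -⟩, -⟩⟩
  · obtain rfl := Option.some.inj (hv.symm.trans h1)
    exact haS hvS
  · obtain rfl := Option.some.inj (hv'.symm.trans h1)
    obtain rfl : x = x' := Option.some.inj hx'
    exact hE hxv

theorem not_blocksAt_one_cons_of_collider (q : GPath E a b) {x w : V} (hx : x ∉ q.nodes)
    (hxa : Adj E x a) (hE : E x a) (hw : q.nodes[1]? = some w) (hwa : E w a) (haS : a ∈ S) :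
    ¬ (q.cons x hx hxa).BlocksAt S 1 := by
  have h1 : (q.cons x hx hxa).nodes[1]? = some a := q.nodes_getElem?_zero
  rintro ⟨v, -, hv, ⟨hnc, -⟩ | ⟨-, hvS, -⟩⟩
  · exact hnc ⟨x, a, w, rfl, h1, hw, hE, hwa⟩
  · obtain rfl := Option.some.inj (hv.symm.trans h1)
    exact hvS haS

theorem BlocksAt.of_drop {p : GPath E a b} {j : ℕ} {hj : p.nodes[j]? = some c} {hcb : c ≠ b}
    {i : ℕ} (h : (p.drop j hj hcb).BlocksAt S i) : p.BlocksAt S (j + i) := by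
  obtain ⟨v, ⟨hi0, hi⟩, hv, hblock⟩ := h
  simp only [drop, List.length_drop, List.getElem?_drop] at hi hv
  refine ⟨v, ⟨by omega, by omega⟩, hv, ?_⟩
  rwa [colliderAt_drop p j hj hcb hi0] at hblock

theorem BlockedBy.of_drop {p : GPath E a b} {j : ℕ} {hj : p.nodes[j]? = some c} {hcb : c ≠ b}
    (h : (p.drop j hj hcb).BlockedBy S) : p.BlockedBy S :=
  let ⟨i, hi⟩ := h; ⟨j + i, BlocksAt.of_drop hi⟩

theorem BlocksAt.of_map {W : Type*} {E' : W → W → Prop} {p : GPath E a b} {f : V ↪ W}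
    {hf : ∀ u v, E u v → E' (f u) (f v)} (hf' : ∀ u v, E' (f u) (f v) → E u v) {i : ℕ}
    (h : (p.map f hf).BlocksAt (f '' S) i) : p.BlocksAt S i := by
  obtain ⟨v', ⟨hi0, hi⟩, hv', hblock⟩ := h
  simp only [map, List.length_map, List.getElem?_map, Option.map_eq_some_iff] at hi hv'
  obtain ⟨v, hv, rfl⟩ := hv'
  rw [colliderAt_map p f hf hf' i] at hblock
  refine ⟨v, ⟨hi0, hi⟩, hv, ?_⟩
  rcases hblock with ⟨hnc, hvS⟩ | ⟨hc, hvS, hdS⟩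
  · exact .inl ⟨hnc, f.injective.mem_set_image.1 hvS⟩
  · exact .inr ⟨hc, fun h => hvS ⟨v, h, rfl⟩,
      fun d hd h => hdS (f d) (Relation.TransGen.lift f hf v d hd) ⟨d, h, rfl⟩⟩

theorem BlockedBy.of_map {W : Type*} {E' : W → W → Prop} {p : GPath E a b} {f : V ↪ W}
    {hf : ∀ u v, E u v → E' (f u) (f v)} (hf' : ∀ u v, E' (f u) (f v) → E u v)
    (h : (p.map f hf).BlockedBy (f '' S)) : p.BlockedBy S :=
  let ⟨i, hi⟩ := h; ⟨i, BlocksAt.of_map hf' hi⟩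

theorem not_blockedBy_cons_of_not_edge {q : GPath E a b} (hq : ¬ q.BlockedBy S) {x : V}
    (hx : x ∉ q.nodes) (hxa : Adj E x a) (hE : ¬ E x a) (haS : a ∉ S) :
    ¬ (q.cons x hx hxa).BlockedBy S :=
  fun h => hq (h.of_cons (q.not_blocksAt_one_cons_of_not_edge hx hxa hE haS))

theorem not_blockedBy_cons_of_collider {q : GPath E a b} (hq : ¬ q.BlockedBy S) {x w : V}
    (hx : x ∉ q.nodes) (hE : E x a) (hw : q.nodes[1]? = some w) (hwa : E w a) (haS : a ∈ S) :
    ¬ (q.cons x hx (.inl hE)).BlockedBy S :=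
  fun h => hq (h.of_cons (q.not_blocksAt_one_cons_of_collider hx _ hE hw hwa haS))

/-- If `x` lies on `p`, take the tail of `p` from `x`; otherwise prepend `x → a`, which makes
`a ∈ S` an open collider, or `x ← u`, joining `p` at `u` if `u` lies on it and through the open
collider `u → a ← w` if not. -/
theorem exists_open_of_parent_or_confounder (p : GPath E a b) (hp : ¬ p.BlockedBy S)
    (hinto : p.IntoFirst) (haS : a ∈ S) {x : V} (hxb : x ≠ b)
    (hx : E x a ∨ ∃ u, E u x ∧ E u a ∧ u ∉ S ∧ u ≠ b ∧ ∀ w, ¬ E w u) :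
    ∃ r : GPath E x b, ¬ r.BlockedBy S := by
  obtain ⟨w, hw, hwa⟩ := hinto
  by_cases hxp : x ∈ p.nodes
  · obtain ⟨j, hj⟩ := List.mem_iff_getElem?.1 hxp
    exact ⟨p.drop j hj hxb, fun h => hp h.of_drop⟩
  rcases hx with hxa | ⟨u, hux, hua, huS, hub, hu⟩
  · exact ⟨p.cons x hxp (.inl hxa), not_blockedBy_cons_of_collider hp hxp hxa hw hwa haS⟩
  by_cases hup : u ∈ p.nodes
  · obtain ⟨j, hj⟩ := List.mem_iff_getElem?.1 hup
    have hxp' : x ∉ (p.drop j hj hub).nodes := fun h => hxp (List.mem_of_mem_drop h)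
    exact ⟨_, not_blockedBy_cons_of_not_edge (fun h => hp h.of_drop) hxp' (.inr hux)
      (hu x) huS⟩
  · have hxu : x ∉ (p.cons u hup (.inl hua)).nodes := by
      simp only [cons, List.mem_cons, not_or]
      exact ⟨fun h => hu x (h ▸ hux), hxp⟩
    exact ⟨_, not_blockedBy_cons_of_not_edge
      (not_blockedBy_cons_of_collider hp hup hua hw hwa haS) hxu (.inr hux) (hu x) huS⟩

end GPath

theorem not_dSep_subEdge {xt b : V} {S : Set V} {E : V → V → Prop} (V0 : Set V)
    (r : GPath E xt b) (hr : ¬ r.BlockedBy S) (hxtS : xt ∉ S) :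
    ¬ DSep (subEdge E xt V0) none (some b) (some '' S) := by
  let r' : GPath (subEdge E xt V0) (some xt) (some b) := r.map .some fun _ _ h => h
  have hnone : none ∉ r'.nodes := by simp [r', GPath.map]
  have hxtS' : some xt ∉ some '' S := fun h => hxtS (Option.some_injective V |>.mem_set_image.1 h)
  have hr' : ¬ r'.BlockedBy (some '' S) := fun h => hr (GPath.BlockedBy.of_map (fun _ _ h => h) h)
  exact fun hdsep =>
    GPath.not_blockedBy_cons_of_not_edge hr' hnone (.inr (.inl rfl)) id hxtS' (hdsep _)

theorem descendant_eq_of_unique_child {E : V → V → Prop} {t y d : V}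
    (hchild : ∀ w, E t w → w = y) (hy : ∀ w, ¬ E y w) (h : Descendant E t d) : d = y := by
  induction h with
  | single h => exact hchild _ h
  | tail _ h ih => exact absurd (ih ▸ h) (hy _)

end CausalDAG

open CausalDAG in
theorem stmt0_general {V : Type*} (M : SemiMarkov V)
    (hA1 : Assumption1 M)
    (xt : V) (hxt : xt ∈ M.Xo)
    (hedge : M.E xt M.t ∨ ∃ u ∈ M.Xu, M.E u xt ∧ M.E u M.t)
    (V0 : Set V)
    (Z : Set V) (hZ : Z ⊆ M.Xo \ {xt})
    (hdsep : DSep (subEdge M.E xt V0) (none : Option V) (some M.y)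
      (some '' (Z ∪ {M.t}))) :
    BackDoor M.E M.t M.y Z := by
  obtain ⟨-, hchild, hy⟩ := hA1
  have hXo (v) (hv : v ∈ M.Xo) : v ≠ M.t ∧ v ≠ M.y ∧ v ∉ M.Xu :=
    ⟨by rintro rfl; exact M.t_notin (.inl hv), by rintro rfl; exact M.y_notin (.inl hv),
      Set.disjoint_left.1 M.disjoint hv⟩
  refine ⟨fun z hz hd => (hXo z (hZ hz).1).2.1 (descendant_eq_of_unique_child hchild hy hd),
    fun p hinto => ?_⟩
  by_contra hp
  have hedge' : M.E xt M.t ∨ ∃ u, M.E u xt ∧ M.E u M.t ∧ u ∉ Z ∪ {M.t} ∧ u ≠ M.y ∧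
      ∀ w, ¬ M.E w u := by
    refine hedge.imp_right fun ⟨u, hu, hux, hut⟩ =>
      ⟨u, hux, hut, ?_, ?_, M.unobs_no_parents u hu⟩
    · rintro (h | rfl)
      exacts [(hXo u (hZ h).1).2.2 hu, M.t_notin (.inr hu)]
    · rintro rfl; exact M.y_notin (.inr hu)
  obtain ⟨r, hr⟩ := p.exists_open_of_parent_or_confounder (fun h => hp h.of_union_head) hinto
    (.inr rfl) (hXo xt hxt).2.1 hedge'
  have hxtS : xt ∉ Z ∪ {M.t} := by
    rintro (h | h)
    exacts [(hZ h).2 rfl, (hXo xt hxt).1 h]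
  exact not_dSep_subEdge V0 r hr hxtS hdsep

open CausalDAG in
/-- sufficiency, Theorem 1: if `e` and `y` are d-separated by
`Z ∪ {t}` in the sub-sampled graph, then `Z` satisfies the back-door criterion. -/
theorem stmt0 {V : Type*} [Finite V] (M : SemiMarkov V)
    (hA1 : Assumption1 M)
    (xt : V) (hxt : xt ∈ M.Xo)
    (hedge : M.E xt M.t ∨ ∃ u ∈ M.Xu, M.E u xt ∧ M.E u M.t)
    (V0 : Set V) (hV0 : V0 ⊆ (M.Xo ∪ {M.t}) \ {xt})
    (Z : Set V) (hZ : Z ⊆ M.Xo \ {xt})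
    (hdsep : DSep (subEdge M.E xt V0) (none : Option V) (some M.y)
      (some '' (Z ∪ {M.t}))) :
    BackDoor M.E M.t M.y Z :=
  stmt0_general M hA1 xt hxt hedge V0 Z hZ hdsep
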